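/- For any field k and any t ∈ k, the rational map g_t of P^3 defined by the four degree-13 forms (f_t)_i restricts to a bijective (biregular) automorphism of the affine open set {D ≠ 0} ⊂ P^3, with inverse given by g_{-t}. -/

import Mathlib

/-!
Read `x` as the binary cubic `x0*T0^3 + 3*x1*T0^2*T1 + 3*x2*T0*T1^2 + x3*T1^3`, whose
discriminant is `D`. Where `D(x) ≠ 0`, `g_t(x) = D(x)^3 • σ_s(x)` with `s = t x0^4 / D(x)`,
where `σ_s` is the substitution `T0 ↦ T0 + s T1`. Such a substitution fixes `x0` and, being
unimodular, preserves `D`; hence `D(g_t x) = D(x)^13`, and `g_{-t}` undoes the substitution, so that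
`g_{-t}(g_t x) = D(x)^42 • x`. Bijectivity on projective points follows from this identity and
the homogeneity of `g_t`.
-/

/-- The discriminant of the binary cubic `x0*T0^3 + 3*x1*T0^2*T1 + 3*x2*T0*T1^2 + x3*T1^3`. -/
def Dq {R : Type*} [CommRing R] (x0 x1 x2 x3 : R) : R :=
  x0 ^ 2 * x3 ^ 2 - 3 * x1 ^ 2 * x2 ^ 2 - 6 * x0 * x1 * x2 * x3 + 4 * x0 * x2 ^ 3 +
    4 * x3 * x1 ^ 3

/-- The four degree-13 forms `(f_t)_0, (f_t)_1, (f_t)_2, (f_t)_3` of the Cremona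
transformation `g_t`. -/
def fT {R : Type*} [CommRing R] (t x0 x1 x2 x3 : R) : Fin 4 → R :=
  ![x0 * Dq x0 x1 x2 x3 ^ 3,
    x1 * Dq x0 x1 x2 x3 ^ 3 + t * x0 ^ 5 * Dq x0 x1 x2 x3 ^ 2,
    x2 * Dq x0 x1 x2 x3 ^ 3 + 2 * t * x1 * x0 ^ 4 * Dq x0 x1 x2 x3 ^ 2 +
      t ^ 2 * x0 ^ 9 * Dq x0 x1 x2 x3,
    x3 * Dq x0 x1 x2 x3 ^ 3 + 3 * t * x2 * x0 ^ 4 * Dq x0 x1 x2 x3 ^ 2 +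
      3 * t ^ 2 * x1 * x0 ^ 8 * Dq x0 x1 x2 x3 + t ^ 3 * x0 ^ 13]

/-- The cone map underlying the Cremona transformation `g_t`. -/
def Gmap {k : Type*} [Field k] (t : k) (x : Fin 4 → k) : Fin 4 → k :=
  fT t (x 0) (x 1) (x 2) (x 3)

/-- Coefficients of the cubic after the substitution `T0 ↦ T0 + s T1`. -/
def shear {R : Type*} [CommRing R] (s : R) (x : Fin 4 → R) : Fin 4 → R :=
  ![x 0, x 1 + s * x 0, x 2 + 2 * s * x 1 + s ^ 2 * x 0,
    x 3 + 3 * s * x 2 + 3 * s ^ 2 * x 1 + s ^ 3 * x 0]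

local notation "Δ " x:max => Dq (x 0) (x 1) (x 2) (x 3)

section CommRing

variable {R : Type*} [CommRing R]

lemma Dq_shear (s : R) (x : Fin 4 → R) : Δ (shear s x) = Δ x := by
  simp only [shear, Dq, Matrix.cons_val_zero, Matrix.cons_val_one, Matrix.cons_val_two,
    Matrix.cons_val_three, Matrix.head_cons, Matrix.tail_cons]
  ring

lemma shear_neg_shear (s : R) (x : Fin 4 → R) : shear (-s) (shear s x) = x := by
  funext i
  fin_cases i <;> simp [shear] <;> ring

lemma Dq_mul (c x0 x1 x2 x3 : R) :
    Dq (c * x0) (c * x1) (c * x2) (c * x3) = c ^ 4 * Dq x0 x1 x2 x3 := by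
  simp only [Dq]
  ring

end CommRing

section Field

variable {k : Type*} [Field k]

lemma Gmap_smul (t c : k) (x : Fin 4 → k) : Gmap t (c • x) = c ^ 13 • Gmap t x := by
  funext i
  fin_cases i <;> simp [Gmap, fT, Dq_mul] <;> ring

lemma Gmap_eq_smul_shear (t : k) {x : Fin 4 → k} (hx : Δ x ≠ 0) :
    Gmap t x = (Δ x) ^ 3 • shear (t * x 0 ^ 4 / Δ x) x := by
  funext i
  fin_cases i <;> simp [Gmap, fT, shear] <;> field_simp

lemma Dq_Gmap (t : k) {x : Fin 4 → k} (hx : Δ x ≠ 0) : Δ (Gmap t x) = (Δ x) ^ 13 := by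
  rw [Gmap_eq_smul_shear t hx]
  simp only [Pi.smul_apply, smul_eq_mul]
  rw [Dq_mul, Dq_shear]
  ring

lemma Dq_Gmap_ne_zero (t : k) {x : Fin 4 → k} (hx : Δ x ≠ 0) : Δ (Gmap t x) ≠ 0 :=
  Dq_Gmap t hx ▸ pow_ne_zero _ hx

lemma Gmap_neg_Gmap (t : k) {x : Fin 4 → k} (hx : Δ x ≠ 0) :
    Gmap (-t) (Gmap t x) = (Δ x) ^ 42 • x := by
  set s := t * x 0 ^ 4 / Δ x
  have hσ : Gmap (-t) (shear s x) = (Δ x) ^ 3 • x := by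
    rw [Gmap_eq_smul_shear (-t) (by rwa [Dq_shear]), Dq_shear]
    have hs : -t * shear s x 0 ^ 4 / Δ x = -s := by simp [shear, s, neg_div]
    rw [hs, shear_neg_shear]
  rw [Gmap_eq_smul_shear t hx, Gmap_smul, hσ, smul_smul]
  congr 1
  ring

lemma eq_smul_of_Gmap_eq_smul_Gmap (t : k) {x x' : Fin 4 → k} {c : k}
    (hx : Δ x ≠ 0) (hx' : Δ x' ≠ 0) (h : Gmap t x = c • Gmap t x') :
    x = ((Δ x) ^ 42)⁻¹ • (c ^ 13 * (Δ x') ^ 42) • x' := by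
  rw [mul_smul, ← Gmap_neg_Gmap t hx', ← Gmap_smul, ← h, Gmap_neg_Gmap t hx,
    inv_smul_smul₀ (pow_ne_zero _ hx)]

end Field

/-- For any field `k` and any `t ∈ k`, the rational map `g_t` restricts to a bijective
(biregular) automorphism of the affine open set `{D ≠ 0} ⊂ P^3`, with inverse `g_{-t}`:
it preserves `{D ≠ 0}`, `g_{-t} ∘ g_t` is the identity up to a nonzero scalar, it is
surjective and injective up to nonzero scalars (i.e. on projective points). -/
theorem gt_automorphism_of_complement {k : Type*} [Field k] (t : k) :
    (∀ x : Fin 4 → k, Dq (x 0) (x 1) (x 2) (x 3) ≠ 0 →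
      Dq (Gmap t x 0) (Gmap t x 1) (Gmap t x 2) (Gmap t x 3) ≠ 0) ∧
    (∀ x : Fin 4 → k, Dq (x 0) (x 1) (x 2) (x 3) ≠ 0 →
      ∃ c : k, c ≠ 0 ∧ Gmap (-t) (Gmap t x) = c • x) ∧
    (∀ y : Fin 4 → k, Dq (y 0) (y 1) (y 2) (y 3) ≠ 0 →
      ∃ x : Fin 4 → k, Dq (x 0) (x 1) (x 2) (x 3) ≠ 0 ∧
        ∃ c : k, c ≠ 0 ∧ Gmap t x = c • y) ∧
    (∀ x x' : Fin 4 → k, Dq (x 0) (x 1) (x 2) (x 3) ≠ 0 →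
      Dq (x' 0) (x' 1) (x' 2) (x' 3) ≠ 0 →
      (∃ c : k, c ≠ 0 ∧ Gmap t x = c • Gmap t x') →
      ∃ c : k, c ≠ 0 ∧ x = c • x') := by
  refine ⟨fun x hx ↦ Dq_Gmap_ne_zero t hx,
    fun x hx ↦ ⟨_, pow_ne_zero _ hx, Gmap_neg_Gmap t hx⟩,
    fun y hy ↦ ⟨Gmap (-t) y, Dq_Gmap_ne_zero (-t) hy, _, pow_ne_zero 42 hy, ?_⟩, ?_⟩
  · simpa using Gmap_neg_Gmap (-t) hy
  · rintro x x' hx hx' ⟨c, hc, h⟩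
    exact ⟨_, by simp [hx, hx', hc],
      (eq_smul_of_Gmap_eq_smul_Gmap t hx hx' h).trans (smul_smul _ _ _)⟩
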